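/- arXiv:2605.30426 — 3 statements merged into one kernel-verified Lean document; each statement's English description precedes it below -/
import Mathlib

section
/- The real biquadratic form p(x,y) = (x₁² + x₃²)y₁² + (x₂² + x₁²)y₂² + (x₃² + x₂²)y₃² − 2x₁x₂y₁y₂ − 2x₁x₃y₁y₃ − 2x₂x₃y₂y₃ on ℝ³ × ℝ³ (the real restriction of the Choi map polynomial) is not a sum of squares of real bilinear forms. -/
/-- The real restriction of the Choi map biquadratic form is not a sum of
squares of real bilinear forms. -/
theorem stmt4 :
    ¬ ∃ (r : ℕ) (a : Fin r → Matrix (Fin 3) (Fin 3) ℝ),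
      ∀ x y : Fin 3 → ℝ,
        (x 0 ^ 2 + x 2 ^ 2) * y 0 ^ 2 + (x 1 ^ 2 + x 0 ^ 2) * y 1 ^ 2
          + (x 2 ^ 2 + x 1 ^ 2) * y 2 ^ 2
          - 2 * x 0 * x 1 * y 0 * y 1 - 2 * x 0 * x 2 * y 0 * y 2
          - 2 * x 1 * x 2 * y 1 * y 2
        = ∑ s, (∑ i, ∑ j, a s i j * x i * y j) ^ 2 := by
  rintro ⟨r, a, h⟩
  have h00 := h ![1,0,0] ![1,0,0]
  have h01 := h ![1,0,0] ![0,1,0]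
  have h12 := h ![0,1,0] ![0,0,1]
  have h20 := h ![0,0,1] ![1,0,0]
  have z10 := h ![0,1,0] ![1,0,0]
  have z02 := h ![1,0,0] ![0,0,1]
  have z21 := h ![0,0,1] ![0,1,0]
  have G1 := h ![1,1,0] ![1,1,0]
  have G1' := h ![1,-1,0] ![1,-1,0]
  have G2 := h ![1,0,1] ![1,0,1]
  have G2' := h ![1,0,-1] ![1,0,-1]
  have G3 := h ![0,1,1] ![0,1,1]
  have G3' := h ![0,1,-1] ![0,1,-1]
  norm_num [Fin.sum_univ_three, Matrix.cons_val_zero, Matrix.cons_val_one,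
    Matrix.head_cons, Matrix.cons_val_two, Matrix.tail_cons] at h00 h01 h12 h20 z10 z02 z21 G1 G1' G2 G2' G3 G3'
  -- pointwise vanishing of the off entries
  have hz10 : ∀ s : Fin r, a s 1 0 = 0 := fun s => by
    have := (Finset.sum_eq_zero_iff_of_nonneg
      (fun i _ => sq_nonneg (a i 1 0))).mp z10.symm s (Finset.mem_univ s)
    exact pow_eq_zero_iff (two_ne_zero) |>.mp this
  have hz02 : ∀ s : Fin r, a s 0 2 = 0 := fun s => by
    have := (Finset.sum_eq_zero_iff_of_nonneg
      (fun i _ => sq_nonneg (a i 0 2))).mp z02.symm s (Finset.mem_univ s)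
    exact pow_eq_zero_iff (two_ne_zero) |>.mp this
  have hz21 : ∀ s : Fin r, a s 2 1 = 0 := fun s => by
    have := (Finset.sum_eq_zero_iff_of_nonneg
      (fun i _ => sq_nonneg (a i 2 1))).mp z21.symm s (Finset.mem_univ s)
    exact pow_eq_zero_iff (two_ne_zero) |>.mp this
  -- pair (0,1)
  have K1 : ∑ s, (a s 0 0 + a s 1 1) ^ 2 = 0 := by
    have e1 : ∑ s, ((a s 0 0 + a s 0 1 + (a s 1 0 + a s 1 1)) ^ 2
        + (a s 0 0 + -a s 0 1 + (-a s 1 0 + a s 1 1)) ^ 2) = 2 := by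
      rw [Finset.sum_add_distrib, ← G1, ← G1']; norm_num
    have e2 : ∑ s, ((a s 0 0 + a s 0 1 + (a s 1 0 + a s 1 1)) ^ 2
        + (a s 0 0 + -a s 0 1 + (-a s 1 0 + a s 1 1)) ^ 2)
        = ∑ s, (2 * (a s 0 0 + a s 1 1) ^ 2 + 2 * a s 0 1 ^ 2) :=
      Finset.sum_congr rfl fun s _ => by rw [hz10 s]; ring
    rw [e2, Finset.sum_add_distrib, ← Finset.mul_sum, ← Finset.mul_sum] at e1
    linarith
  have huv : ∀ s : Fin r, a s 0 0 + a s 1 1 = 0 := fun s => by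
    have := (Finset.sum_eq_zero_iff_of_nonneg
      (fun i _ => sq_nonneg (a i 0 0 + a i 1 1))).mp K1 s (Finset.mem_univ s)
    exact pow_eq_zero_iff (two_ne_zero) |>.mp this
  -- pair (0,2)
  have K2 : ∑ s, (a s 0 0 + a s 2 2) ^ 2 = 0 := by
    have e1 : ∑ s, ((a s 0 0 + a s 0 2 + (a s 2 0 + a s 2 2)) ^ 2
        + (a s 0 0 + -a s 0 2 + (-a s 2 0 + a s 2 2)) ^ 2) = 2 := by
      rw [Finset.sum_add_distrib, ← G2, ← G2']; norm_num
    have e2 : ∑ s, ((a s 0 0 + a s 0 2 + (a s 2 0 + a s 2 2)) ^ 2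
        + (a s 0 0 + -a s 0 2 + (-a s 2 0 + a s 2 2)) ^ 2)
        = ∑ s, (2 * (a s 0 0 + a s 2 2) ^ 2 + 2 * a s 2 0 ^ 2) :=
      Finset.sum_congr rfl fun s _ => by rw [hz02 s]; ring
    rw [e2, Finset.sum_add_distrib, ← Finset.mul_sum, ← Finset.mul_sum] at e1
    linarith
  have huw : ∀ s : Fin r, a s 0 0 + a s 2 2 = 0 := fun s => by
    have := (Finset.sum_eq_zero_iff_of_nonneg
      (fun i _ => sq_nonneg (a i 0 0 + a i 2 2))).mp K2 s (Finset.mem_univ s)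
    exact pow_eq_zero_iff (two_ne_zero) |>.mp this
  -- pair (1,2)
  have K3 : ∑ s, (a s 1 1 + a s 2 2) ^ 2 = 0 := by
    have e1 : ∑ s, ((a s 1 1 + a s 1 2 + (a s 2 1 + a s 2 2)) ^ 2
        + (a s 1 1 + -a s 1 2 + (-a s 2 1 + a s 2 2)) ^ 2) = 2 := by
      rw [Finset.sum_add_distrib, ← G3, ← G3']; norm_num
    have e2 : ∑ s, ((a s 1 1 + a s 1 2 + (a s 2 1 + a s 2 2)) ^ 2
        + (a s 1 1 + -a s 1 2 + (-a s 2 1 + a s 2 2)) ^ 2)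
        = ∑ s, (2 * (a s 1 1 + a s 2 2) ^ 2 + 2 * a s 1 2 ^ 2) :=
      Finset.sum_congr rfl fun s _ => by rw [hz21 s]; ring
    rw [e2, Finset.sum_add_distrib, ← Finset.mul_sum, ← Finset.mul_sum] at e1
    linarith
  have hvw : ∀ s : Fin r, a s 1 1 + a s 2 2 = 0 := fun s => by
    have := (Finset.sum_eq_zero_iff_of_nonneg
      (fun i _ => sq_nonneg (a i 1 1 + a i 2 2))).mp K3 s (Finset.mem_univ s)
    exact pow_eq_zero_iff (two_ne_zero) |>.mp this
  -- final contradiction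
  have hzero : ∑ s, a s 0 0 ^ 2 = 0 := Finset.sum_eq_zero fun s _ => by
    have h1 := huv s; have h2 := huw s; have h3 := hvw s
    have : a s 0 0 = 0 := by linarith
    rw [this]; ring
  linarith [h00, hzero]
end

section
/- Let W be an optimal entanglement witness on a finite-dimensional bipartite Hilbert space. Then W is tight: there exists a normalized product vector |x⊗y⟩ with ⟨x⊗y|W|x⊗y⟩ = 0. -/
open Matrix
open scoped ComplexOrder

/-!
If an optimal witness `W` were not tight, the expectation value `⟨x⊗y|W|x⊗y⟩` would be
strictly positive on the compact set of pairs of unit vectors, hence bounded below there by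
some `ε > 0`. By bihomogeneity `W - ε • 1` is then still block-positive, and `ε • 1` is a
nonzero positive semidefinite matrix that can be subtracted from `W`, contradicting optimality.
-/

section Bihomogeneous

variable {E F : Type*} [NormedAddCommGroup E] [NormedSpace ℝ E] [ProperSpace E]
  [NormedAddCommGroup F] [NormedSpace ℝ F] [ProperSpace F]

theorem exists_pos_mul_le_of_bihomogeneous (f : E → F → ℝ)
    (hf : Continuous (Function.uncurry f))
    (hsmul : ∀ (s t : ℝ) (x : E) (y : F), f (s • x) (t • y) = s ^ 2 * t ^ 2 * f x y)
    (hpos : ∀ x y, ‖x‖ = 1 → ‖y‖ = 1 → 0 < f x y) :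
    ∃ ε > 0, ∀ x y, ε * (‖x‖ ^ 2 * ‖y‖ ^ 2) ≤ f x y := by
  obtain ⟨ε, hε, hmin⟩ := ((isCompact_sphere (0 : E) 1).prod (isCompact_sphere (0 : F) 1))
    |>.exists_forall_le' hf.continuousOn (a := 0) fun p ⟨hx, hy⟩ =>
      hpos p.1 p.2 (by simpa using hx) (by simpa using hy)
  refine ⟨ε, hε, fun x y => ?_⟩
  rcases eq_or_ne x 0 with rfl | hx
  · simpa using (hsmul 0 1 0 y).ge
  rcases eq_or_ne y 0 with rfl | hy
  · simpa using (hsmul 1 0 x 0).ge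
  have hunit : ε ≤ f (‖x‖⁻¹ • x) (‖y‖⁻¹ • y) :=
    hmin (_, _) ⟨by simp [norm_smul, hx], by simp [norm_smul, hy]⟩
  calc ε * (‖x‖ ^ 2 * ‖y‖ ^ 2)
      ≤ f (‖x‖⁻¹ • x) (‖y‖⁻¹ • y) * (‖x‖ ^ 2 * ‖y‖ ^ 2) := by gcongr
    _ = f x y := by rw [hsmul]; field_simp

end Bihomogeneous

section QuadraticForm

variable {ν : Type*} [Fintype ν]

theorem star_smul_dotProduct_mulVec_smul (M : Matrix ν ν ℂ) (r : ℝ) (z : ν → ℂ) :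
    star (r • z) ⬝ᵥ M *ᵥ (r • z) = (r ^ 2 : ℝ) * (star z ⬝ᵥ M *ᵥ z) := by
  rw [star_smul, star_trivial, mulVec_smul, dotProduct_smul, smul_dotProduct, smul_smul,
    Complex.real_smul, sq]

theorem star_dotProduct_self_eq_norm_sq (z : ν → ℂ) :
    star z ⬝ᵥ z = (‖WithLp.toLp 2 z‖ ^ 2 : ℝ) := by
  rw [dotProduct_comm, ← EuclideanSpace.inner_toLp_toLp, inner_self_eq_norm_sq_to_K]
  simp

end QuadraticForm

section ProductVectors

variable {ι κ : Type*}

def prodVec (x : ι → ℂ) (y : κ → ℂ) : ι × κ → ℂ := fun p => x p.1 * y p.2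

theorem prodVec_smul (s t : ℝ) (x : ι → ℂ) (y : κ → ℂ) :
    prodVec (s • x) (t • y) = (s * t) • prodVec x y := by
  ext p
  simp only [prodVec, Pi.smul_apply, Complex.real_smul]
  push_cast
  ring

variable [Fintype ι] [Fintype κ]

theorem norm_toLp_prodVec (x : ι → ℂ) (y : κ → ℂ) :
    ‖WithLp.toLp 2 (prodVec x y)‖ = ‖WithLp.toLp 2 x‖ * ‖WithLp.toLp 2 y‖ := by
  rw [← sq_eq_sq₀ (norm_nonneg _) (by positivity), mul_pow, EuclideanSpace.norm_sq_eq,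
    EuclideanSpace.norm_sq_eq, EuclideanSpace.norm_sq_eq, Finset.sum_mul_sum,
    ← Finset.univ_product_univ, Finset.sum_product]
  simp [prodVec, mul_pow]

theorem sum_normSq_prodVec (x : ι → ℂ) (y : κ → ℂ) :
    ∑ p, Complex.normSq (prodVec x y p) =
      ‖WithLp.toLp 2 x‖ ^ 2 * ‖WithLp.toLp 2 y‖ ^ 2 := by
  rw [← mul_pow, ← norm_toLp_prodVec, EuclideanSpace.norm_sq_eq]
  simp [Complex.sq_norm]

def BlockPositive (W : Matrix (ι × κ) (ι × κ) ℂ) : Prop :=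
  ∀ x y, 0 ≤ star (prodVec x y) ⬝ᵥ W *ᵥ prodVec x y

def IsTight (W : Matrix (ι × κ) (ι × κ) ℂ) : Prop :=
  ∃ x y, ∑ p, Complex.normSq (prodVec x y p) = 1 ∧
    star (prodVec x y) ⬝ᵥ W *ᵥ prodVec x y = 0

theorem BlockPositive.exists_pos_sub_smul_one [DecidableEq ι] [DecidableEq κ]
    {W : Matrix (ι × κ) (ι × κ) ℂ} (hW : BlockPositive W) (hW0 : ¬ IsTight W) :
    ∃ ε : ℝ, 0 < ε ∧ BlockPositive (W - (ε : ℂ) • 1) := by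
  set f : EuclideanSpace ℂ ι → EuclideanSpace ℂ κ → ℝ := fun x y =>
    (star (prodVec x.ofLp y.ofLp) ⬝ᵥ W *ᵥ prodVec x.ofLp y.ofLp).re
  have hf_eq (x : ι → ℂ) (y : κ → ℂ) :
      star (prodVec x y) ⬝ᵥ W *ᵥ prodVec x y = f (WithLp.toLp 2 x) (WithLp.toLp 2 y) :=
    Complex.eq_re_of_ofReal_le (r := 0) (by simpa using hW x y)
  have hcont : Continuous (Function.uncurry f) := by
    simp only [f, prodVec, dotProduct, mulVec, Pi.star_apply]
    fun_prop
  have hsmul (s t : ℝ) x y : f (s • x) (t • y) = s ^ 2 * t ^ 2 * f x y := by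
    simp only [f, WithLp.ofLp_smul, prodVec_smul, star_smul_dotProduct_mulVec_smul]
    rw [Complex.re_ofReal_mul, mul_pow]
  have hpos (x y) (hx : ‖x‖ = 1) (hy : ‖y‖ = 1) : 0 < f x y := by
    have hnorm : ∑ p, Complex.normSq (prodVec x.ofLp y.ofLp p) = 1 := by
      simp [sum_normSq_prodVec, hx, hy]
    refine (Complex.nonneg_iff.1 (hW _ _)).1.lt_of_ne' fun (h0 : f x y = 0) =>
      hW0 ⟨_, _, hnorm, ?_⟩
    simpa [h0] using hf_eq x.ofLp y.ofLp
  obtain ⟨ε, hε, hle⟩ := exists_pos_mul_le_of_bihomogeneous f hcont hsmul hpos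
  refine ⟨ε, hε, fun x y => ?_⟩
  rw [sub_mulVec, dotProduct_sub, smul_mulVec, one_mulVec, dotProduct_smul,
    star_dotProduct_self_eq_norm_sq, norm_toLp_prodVec, hf_eq, smul_eq_mul, ← Complex.ofReal_mul,
    ← Complex.ofReal_sub]
  have := hle (WithLp.toLp 2 x) (WithLp.toLp 2 y)
  exact_mod_cast sub_nonneg.2 (by simpa [mul_pow] using this)

end ProductVectors

theorem stmt10_general (n m : ℕ) (W : Matrix (Fin n × Fin m) (Fin n × Fin m) ℂ)
    (hbp : ∀ (x : Fin n → ℂ) (y : Fin m → ℂ),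
      0 ≤ star (fun p : Fin n × Fin m => x p.1 * y p.2) ⬝ᵥ
            W *ᵥ (fun p : Fin n × Fin m => x p.1 * y p.2))
    (hnpsd : ¬ W.PosSemidef)
    (hopt : ¬ ∃ P : Matrix (Fin n × Fin m) (Fin n × Fin m) ℂ,
      P.PosSemidef ∧ P ≠ 0 ∧
      ∀ (x : Fin n → ℂ) (y : Fin m → ℂ),
        0 ≤ star (fun p : Fin n × Fin m => x p.1 * y p.2) ⬝ᵥ
              (W - P) *ᵥ (fun p : Fin n × Fin m => x p.1 * y p.2)) :
    ∃ (x : Fin n → ℂ) (y : Fin m → ℂ),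
      (∑ p : Fin n × Fin m, Complex.normSq (x p.1 * y p.2)) = 1 ∧
      star (fun p : Fin n × Fin m => x p.1 * y p.2) ⬝ᵥ
          W *ᵥ (fun p : Fin n × Fin m => x p.1 * y p.2) = 0 := by
  have : Nonempty (Fin n × Fin m) := by
    by_contra hempty
    have : IsEmpty (Fin n × Fin m) := not_nonempty_iff.1 hempty
    exact hnpsd (Subsingleton.elim 0 W ▸ PosSemidef.zero)
  by_contra hW0
  obtain ⟨ε, hε, hWε⟩ := BlockPositive.exists_pos_sub_smul_one hbp hW0
  refine hopt ⟨(ε : ℂ) • 1, PosSemidef.one.smul (by exact_mod_cast hε.le), ?_, hWε⟩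
  exact smul_ne_zero (by exact_mod_cast hε.ne') one_ne_zero

/-- An optimal entanglement witness is tight: there exists a normalized product
vector on which its expectation value vanishes. -/
theorem stmt10 (n m : ℕ) (W : Matrix (Fin n × Fin m) (Fin n × Fin m) ℂ)
    (hW : W.IsHermitian)
    (hbp : ∀ (x : Fin n → ℂ) (y : Fin m → ℂ),
      0 ≤ star (fun p : Fin n × Fin m => x p.1 * y p.2) ⬝ᵥ
            W *ᵥ (fun p : Fin n × Fin m => x p.1 * y p.2))
    (hnpsd : ¬ W.PosSemidef)
    (hopt : ¬ ∃ P : Matrix (Fin n × Fin m) (Fin n × Fin m) ℂ,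
      P.PosSemidef ∧ P ≠ 0 ∧
      ∀ (x : Fin n → ℂ) (y : Fin m → ℂ),
        0 ≤ star (fun p : Fin n × Fin m => x p.1 * y p.2) ⬝ᵥ
              (W - P) *ᵥ (fun p : Fin n × Fin m => x p.1 * y p.2)) :
    ∃ (x : Fin n → ℂ) (y : Fin m → ℂ),
      (∑ p : Fin n × Fin m, Complex.normSq (x p.1 * y p.2)) = 1 ∧
      star (fun p : Fin n × Fin m => x p.1 * y p.2) ⬝ᵥ
          W *ᵥ (fun p : Fin n × Fin m => x p.1 * y p.2) = 0 :=
  stmt10_general n m W hbp hnpsd hopt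
end

section
/- Let Φ : M_m(ℂ) → M_k(ℂ) be a positive linear map and ρ a state on ℂ^n ⊗ ℂ^m. Then (Id ⊗ Φ)(ρ) fails to be positive semidefinite if and only if there exists a vector |η⟩ ∈ ℂ^n ⊗ ℂ^k of maximal Schmidt rank min(n,k) such that Tr[(Id ⊗ Φ†)(|η⟩⟨η|) ρ] < 0. -/
/-!
A positive map commutes with `ᴴ`, so `σ = (Id ⊗ Φ)(ρ)` is Hermitian and fails to be positive
semidefinite exactly when `⟨v|σ|v⟩ < 0` for some `v`. Through the adjoint `Ψ`, the trace expression
in the statement is `⟨η|σ|η⟩`. The set of `η` with `⟨η|σ|η⟩ < 0` is open, and coefficient matrices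
of full rank `min n k` are dense: for the rectangular identity `W`, the leading square minor of
`V + t • W` is `V' + t • 1`, invertible for all `t` outside the finite set `-spectrum V'`.
-/

open Matrix Filter Topology
open scoped ComplexOrder

section IdTensor

variable {ι μ κ : Type*}

open scoped MatrixOrder in
theorem LinearMap.map_conjTranspose_of_posSemidef [Fintype μ] [DecidableEq μ] [Fintype κ]
    [DecidableEq κ] (Φ : Matrix μ μ ℂ →ₗ[ℂ] Matrix κ κ ℂ)
    (hΦ : ∀ X : Matrix μ μ ℂ, X.PosSemidef → (Φ X).PosSemidef) (X : Matrix μ μ ℂ) :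
    Φ Xᴴ = (Φ X)ᴴ :=
  -- a positive `ℂ`-linear map preserves self-adjoints (differences of positives), hence `star`
  map_star (PositiveLinearMap.mk₀ Φ fun X hX => (hΦ X hX.posSemidef).nonneg) X

/-- `(Id ⊗ Φ)(ρ)`, reading `ρ` as an `ι × ι` array of `μ × μ` blocks. -/
def LinearMap.idTensor {R : Type*} [CommSemiring R] (Φ : Matrix μ μ R →ₗ[R] Matrix κ κ R)
    (ρ : Matrix (ι × μ) (ι × μ) R) : Matrix (ι × κ) (ι × κ) R :=
  of fun p q => Φ (of fun a b => ρ (p.1, a) (q.1, b)) p.2 q.2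

theorem LinearMap.isHermitian_idTensor [Fintype μ] [DecidableEq μ] [Fintype κ] [DecidableEq κ]
    (Φ : Matrix μ μ ℂ →ₗ[ℂ] Matrix κ κ ℂ)
    (hΦ : ∀ X : Matrix μ μ ℂ, X.PosSemidef → (Φ X).PosSemidef)
    {ρ : Matrix (ι × μ) (ι × μ) ℂ} (hρ : ρ.IsHermitian) : (Φ.idTensor ρ).IsHermitian := by
  ext p q
  have hblock : (of fun a b => ρ (q.1, a) (p.1, b))ᴴ = of fun a b => ρ (p.1, a) (q.1, b) := by
    ext a b
    exact hρ.apply (p.1, a) (q.1, b)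
  simp only [LinearMap.idTensor, conjTranspose_apply, of_apply]
  rw [← conjTranspose_apply, ← Φ.map_conjTranspose_of_posSemidef hΦ, hblock]

variable [Fintype ι] [Fintype μ] [Fintype κ]

theorem Matrix.dotProduct_mulVec_prod {R : Type*} [CommSemiring R]
    (M : Matrix (ι × κ) (ι × κ) R) (x y : ι × κ → R) :
    x ⬝ᵥ M *ᵥ y = ∑ i, ∑ j,
      Function.curry x i ⬝ᵥ (of fun α β => M (i, α) (j, β)) *ᵥ Function.curry y j := by
  simp only [dotProduct, mulVec, Fintype.sum_prod_type, Finset.mul_sum, Function.curry_apply,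
    of_apply]
  exact Finset.sum_congr rfl fun i _ => Finset.sum_comm

theorem Matrix.trace_mul_vecMulVec {m n R : Type*} [Fintype m] [Fintype n] [CommSemiring R]
    (A : Matrix m n R) (x : n → R) (y : m → R) : (A * vecMulVec x y).trace = y ⬝ᵥ A *ᵥ x := by
  rw [mul_vecMulVec, trace_vecMulVec, dotProduct_comm]

theorem LinearMap.sum_adjoint_mul_eq_dotProduct_idTensor {R : Type*} [CommSemiring R]
    [StarRing R] (Φ : Matrix μ μ R →ₗ[R] Matrix κ κ R) (Ψ : Matrix κ κ R →ₗ[R] Matrix μ μ R)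
    (hΨ : ∀ X Y, (Φ X * Y).trace = (X * Ψ Y).trace)
    (ρ : Matrix (ι × μ) (ι × μ) R) (η : ι × κ → R) :
    ∑ p : ι × μ, ∑ q : ι × μ, Ψ (of fun α β => η (p.1, α) * star (η (q.1, β))) p.2 q.2 * ρ q p
      = star η ⬝ᵥ Φ.idTensor ρ *ᵥ η := by
  calc _ = ∑ i, ∑ j, (Ψ (vecMulVec (Function.curry η i) (star (Function.curry η j))) *
          of fun a b => ρ (j, a) (i, b)).trace := by
        simp only [Fintype.sum_prod_type, Matrix.trace, diag_apply, mul_apply, of_apply]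
        exact Finset.sum_congr rfl fun i _ => Finset.sum_comm
    _ = ∑ i, ∑ j, star (Function.curry η j) ⬝ᵥ
          Φ (of fun a b => ρ (j, a) (i, b)) *ᵥ Function.curry η i := by
        simp_rw [Matrix.trace_mul_comm (Ψ _), ← hΨ, trace_mul_vecMulVec]
    _ = _ := by
        rw [dotProduct_mulVec_prod, Finset.sum_comm]
        rfl

end IdTensor

theorem Matrix.IsHermitian.exists_re_neg_of_not_posSemidef {ν : Type*} [Fintype ν]
    {A : Matrix ν ν ℂ} (hA : A.IsHermitian) (hnot : ¬ A.PosSemidef) :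
    ∃ v, (star v ⬝ᵥ A *ᵥ v).re < 0 := by
  by_contra! hall
  refine hnot (.of_dotProduct_mulVec_nonneg hA fun v => Complex.nonneg_iff.mpr ⟨hall v, ?_⟩)
  simpa using (hA.im_star_dotProduct_mulVec_self v).symm

theorem Matrix.eventually_cofinite_isUnit_add_smul_one {ν : Type*} [Fintype ν] [DecidableEq ν]
    (B : Matrix ν ν ℂ) : ∀ᶠ t : ℂ in cofinite, IsUnit (B + t • 1) := by
  refine (B.finite_spectrum.preimage neg_injective.injOn).subset fun t ht => ?_
  rw [Set.mem_preimage, spectrum.mem_iff, Algebra.algebraMap_eq_smul_one, neg_smul,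
    ← neg_add', IsUnit.neg_iff, add_comm]
  exact ht

theorem Matrix.dense_setOf_rank_eq_min (n k : ℕ) :
    Dense {A : Matrix (Fin n) (Fin k) ℂ | A.rank = min n k} := by
  intro V
  let W : Matrix (Fin n) (Fin k) ℂ := of fun i α => if (i : ℕ) = α then 1 else 0
  let r : Fin (min n k) → Fin n := Fin.castLE (min_le_left n k)
  let c : Fin (min n k) → Fin k := Fin.castLE (min_le_right n k)
  have hW : W.submatrix r c = 1 := by
    ext i j
    simp [W, r, c, one_apply, Fin.ext_iff]
  have hrank : ∀ᶠ t : ℂ in cofinite, (V + t • W).rank = min n k := by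
    filter_upwards [(V.submatrix r c).eventually_cofinite_isUnit_add_smul_one] with t ht
    have hsub : (V + t • W).submatrix r c = V.submatrix r c + t • 1 := by
      rw [← hW]
      rfl
    refine le_antisymm (le_min (rank_le_height _) (rank_le_width _)) ?_
    calc min n k = ((V + t • W).submatrix r c).rank := by
          rw [hsub, rank_of_isUnit _ ht, Fintype.card_fin]
      _ ≤ (V + t • W).rank := rank_submatrix_le _ _ _
  have hV : Tendsto (fun t : ℂ => V + t • W) (𝓝[≠] 0) (𝓝 V) := by
    have hcont : Continuous fun t : ℂ => V + t • W := by fun_prop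
    exact tendsto_nhdsWithin_of_tendsto_nhds (hcont.tendsto' 0 V (by simp))
  exact mem_closure_iff_frequently.mpr
    (hV.frequently (hrank.filter_mono (nhdsNE_le_cofinite 0)).frequently)

theorem stmt14_general (n m k : ℕ)
    (Φ : Matrix (Fin m) (Fin m) ℂ →ₗ[ℂ] Matrix (Fin k) (Fin k) ℂ)
    (hΦ : ∀ X : Matrix (Fin m) (Fin m) ℂ, X.PosSemidef → (Φ X).PosSemidef)
    (Ψ : Matrix (Fin k) (Fin k) ℂ →ₗ[ℂ] Matrix (Fin m) (Fin m) ℂ)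
    (hΨ : ∀ (X : Matrix (Fin m) (Fin m) ℂ) (Y : Matrix (Fin k) (Fin k) ℂ),
      (Φ X * Y).trace = (X * Ψ Y).trace)
    (ρ : Matrix (Fin n × Fin m) (Fin n × Fin m) ℂ)
    (hρ : ρ.PosSemidef) :
    ¬ (Matrix.of fun p q : Fin n × Fin k =>
          (Φ (Matrix.of fun a b : Fin m => ρ (p.1, a) (q.1, b))) p.2 q.2).PosSemidef
    ↔ ∃ η : Fin n × Fin k → ℂ,
        (Matrix.of fun (i : Fin n) (α : Fin k) => η (i, α)).rank = min n k ∧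
        (∑ p : Fin n × Fin m, ∑ q : Fin n × Fin m,
          (Ψ (Matrix.of fun α β : Fin k => η (p.1, α) * star (η (q.1, β)))) p.2 q.2
            * ρ q p) < 0 := by
  change ¬ (Φ.idTensor ρ).PosSemidef ↔ _
  simp_rw [Φ.sum_adjoint_mul_eq_dotProduct_idTensor Ψ hΨ]
  have hσ := Φ.isHermitian_idTensor hΦ hρ.isHermitian
  refine ⟨fun hnot => ?_, fun ⟨η, _, hneg⟩ hpsd => (hpsd.dotProduct_mulVec_nonneg η).not_gt hneg⟩
  obtain ⟨v, hv⟩ := hσ.exists_re_neg_of_not_posSemidef hnot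
  have hopen : IsOpen {A : Matrix (Fin n) (Fin k) ℂ |
      (star (Function.uncurry A) ⬝ᵥ Φ.idTensor ρ *ᵥ Function.uncurry A).re < 0} :=
    isOpen_lt (by fun_prop) continuous_const
  obtain ⟨A, hA_rank, hA_neg⟩ :=
    (dense_setOf_rank_eq_min n k).exists_mem_open hopen ⟨of (Function.curry v), hv⟩
  refine ⟨Function.uncurry A, hA_rank, Complex.lt_def.mpr ⟨hA_neg, ?_⟩⟩
  simpa using hσ.im_star_dotProduct_mulVec_self (Function.uncurry A)

/-- For a positive map Φ with Hilbert–Schmidt adjoint Ψ = Φ† and a state ρ,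
(Id ⊗ Φ)(ρ) fails to be positive semidefinite iff there exists a vector η of
maximal Schmidt rank min(n,k) with Tr[(Id ⊗ Φ†)(|η⟩⟨η|) ρ] < 0. -/
theorem stmt14 (n m k : ℕ)
    (Φ : Matrix (Fin m) (Fin m) ℂ →ₗ[ℂ] Matrix (Fin k) (Fin k) ℂ)
    (hΦ : ∀ X : Matrix (Fin m) (Fin m) ℂ, X.PosSemidef → (Φ X).PosSemidef)
    (Ψ : Matrix (Fin k) (Fin k) ℂ →ₗ[ℂ] Matrix (Fin m) (Fin m) ℂ)
    (hΨ : ∀ (X : Matrix (Fin m) (Fin m) ℂ) (Y : Matrix (Fin k) (Fin k) ℂ),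
      (Φ X * Y).trace = (X * Ψ Y).trace)
    (ρ : Matrix (Fin n × Fin m) (Fin n × Fin m) ℂ)
    (hρ : ρ.PosSemidef) (hρtr : ρ.trace = 1) :
    ¬ (Matrix.of fun p q : Fin n × Fin k =>
          (Φ (Matrix.of fun a b : Fin m => ρ (p.1, a) (q.1, b))) p.2 q.2).PosSemidef
    ↔ ∃ η : Fin n × Fin k → ℂ,
        (Matrix.of fun (i : Fin n) (α : Fin k) => η (i, α)).rank = min n k ∧
        (∑ p : Fin n × Fin m, ∑ q : Fin n × Fin m,
          (Ψ (Matrix.of fun α β : Fin k => η (p.1, α) * star (η (q.1, β)))) p.2 q.2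
            * ρ q p) < 0 :=
  stmt14_general n m k Φ hΦ Ψ hΨ ρ hρ
end
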